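/- If a d-dimensional copula C is symmetric (invariant under all coordinate permutations) and satisfies [C,C] = 0 (i.e., C minimizes Kendall's tau), then its order transform satisfies [C_T, C_T] = 0. More precisely, [C_T, C_T] ≤ d! · [C, C] for every symmetric copula C. -/

import Mathlib

open MeasureTheory

/-- A copula measure: a probability measure on `[0,1]^d` (viewed inside
`Fin d → ℝ`) all of whose univariate marginals are uniform on `[0,1]`. -/
def IsCopulaMeasure {d : ℕ} (μ : Measure (Fin d → ℝ)) : Prop :=
  IsProbabilityMeasure μ ∧
    ∀ i : Fin d, μ.map (fun x => x i) = volume.restrict (Set.Icc 0 1)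

/-- The copula (distribution function) associated with a copula measure. -/
noncomputable def copulaFn {d : ℕ} (μ : Measure (Fin d → ℝ)) (u : Fin d → ℝ) : ℝ :=
  (μ {x | ∀ i, x i ≤ u i}).toReal

/-- The sorting (order statistic) map: `sortVec x` is the nondecreasing
rearrangement of the vector `x`. -/
noncomputable def sortVec {d : ℕ} (x : Fin d → ℝ) : Fin d → ℝ :=
  x ∘ Tuple.sort x

/-- The `i`-th univariate marginal distribution function of a measure on
`Fin d → ℝ`. -/
noncomputable def margCDF {d : ℕ} (ρ : Measure (Fin d → ℝ)) (i : Fin d) (t : ℝ) : ℝ :=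
  (ρ.map (fun x => x i) (Set.Iic t)).toReal

/-- `ν` is the copula measure of the order transform `C_T` of the copula
with copula measure `μ`: Sklar's identity `H^C_T = C_T ∘ (marginals of H^C_T)`
holds, where `H^C_T` is the distribution function of the image of `μ` under
the sorting map. -/
def IsOrderTransform {d : ℕ} (μ ν : Measure (Fin d → ℝ)) : Prop :=
  IsCopulaMeasure ν ∧
    ∀ x : Fin d → ℝ,
      ((μ.map sortVec) {y | ∀ i, y i ≤ x i}).toReal
        = copulaFn ν (fun i => margCDF (μ.map sortVec) i (x i))

/-!
Let `H` be the law of the sorted vector under `μ`. The marginals of `μ`, hence those of `H`, are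
continuous, so the copula of `H` is unique: `ν` is the image of `H` under the map
`x ↦ (F₁ x₁, …, F_d x_d)` built from the marginal distribution functions of `H`, and Sklar's
identity `C_T (F₁ x₁, …, F_d x_d) = H(x)` turns `[C_T, C_T]` into `∫ H dH = ∫ H(sort y) dμ(y)`.
If `sort z ≤ sort y` then `z ≤ y ∘ π` for some permutation `π`, so `H(sort y) ≤ ∑_π C(y ∘ π)`,
and the permutation invariance of `μ` makes each of the `d!` terms integrate to `[C, C]`.
-/

open Set Filter Topology ProbabilityTheory

namespace ProbabilityTheory

variable {ρ : Measure ℝ} [IsProbabilityMeasure ρ] [NullSingletonClass ρ]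

lemma continuous_cdf : Continuous (cdf ρ) := by
  refine continuous_iff_continuousAt.2 fun a =>
    continuousAt_iff_continuous_left_right.2 ⟨?_, (cdf ρ).right_continuous a⟩
  rw [← continuousWithinAt_Iio_iff_Iic, (monotone_cdf ρ).continuousWithinAt_Iio_iff_leftLim_eq]
  have h := (cdf ρ).measure_singleton a
  rw [measure_cdf, MeasureTheory.measure_singleton, eq_comm, ENNReal.ofReal_eq_zero,
    sub_nonpos] at h
  exact le_antisymm ((monotone_cdf ρ).leftLim_le le_rfl) h

lemma exists_cdf_eq_and_preimage_Iic {u : ℝ} (hu : u ∈ Ioo 0 1) :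
    ∃ t, cdf ρ t = u ∧ cdf ρ ⁻¹' Iic u = Iic t := by
  obtain ⟨a, ha⟩ := ((tendsto_cdf_atBot ρ).eventually (eventually_lt_nhds hu.1)).exists
  obtain ⟨b, hb⟩ := ((tendsto_cdf_atTop ρ).eventually (eventually_gt_nhds hu.2)).exists
  obtain ⟨s, -, hs⟩ := intermediate_value_Icc ((monotone_cdf ρ).reflect_lt (ha.trans hb)).le
    continuous_cdf.continuousOn ⟨ha.le, hb.le⟩
  set S := cdf ρ ⁻¹' Iic u
  have hS_bdd : BddAbove S :=
    ⟨b, fun x hx => ((monotone_cdf ρ).reflect_lt (lt_of_le_of_lt hx hb)).le⟩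
  have hsS : s ∈ S := hs.le
  have htS : sSup S ∈ S := (isClosed_Iic.preimage continuous_cdf).csSup_mem ⟨s, hsS⟩ hS_bdd
  refine ⟨sSup S, le_antisymm htS (hs ▸ monotone_cdf ρ (le_csSup hS_bdd hsS)), ?_⟩
  exact Subset.antisymm (fun x hx => le_csSup hS_bdd hx)
    (fun x hx => (monotone_cdf ρ hx).trans htS)

lemma measure_preimage_cdf_Iic {u : ℝ} (hu : u ∈ Ioo 0 1) :
    ρ (cdf ρ ⁻¹' Iic u) = ENNReal.ofReal u := by
  obtain ⟨t, ht, hS⟩ := exists_cdf_eq_and_preimage_Iic (ρ := ρ) hu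
  rw [hS, ← ofReal_cdf, ht]

/-- The probability integral transform. -/
lemma map_cdf_eq_uniform : ρ.map (cdf ρ) = volume.restrict (Icc 0 1) := by
  refine Measure.ext_of_Iic _ _ fun u => ?_
  rw [Measure.map_apply (monotone_cdf ρ).measurable measurableSet_Iic,
    Measure.restrict_apply measurableSet_Iic]
  rcases le_or_gt u 0 with hu0 | hu0
  · have hnull : volume (Iic u ∩ Icc (0:ℝ) 1) = 0 :=
      measure_mono_null (fun x hx => le_antisymm (hx.1.trans hu0) hx.2.1) Real.volume_singleton
    have hlim : Tendsto ENNReal.ofReal (𝓝[>] 0) (𝓝 0) := by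
      simpa using (ENNReal.continuous_ofReal.tendsto 0).mono_left nhdsWithin_le_nhds
    rw [hnull, ← nonpos_iff_eq_zero]
    refine ge_of_tendsto hlim ?_
    filter_upwards [Ioo_mem_nhdsGT one_pos] with ε hε
    exact (measure_mono (preimage_mono (Iic_subset_Iic.2 (hu0.trans hε.1.le)))).trans_eq
      (measure_preimage_cdf_Iic hε)
  rcases lt_or_ge u 1 with hu1 | hu1
  · have hinter : Iic u ∩ Icc (0:ℝ) 1 = Icc 0 u := by
      ext x; simp only [mem_inter_iff, mem_Iic, mem_Icc]; grind
    rw [measure_preimage_cdf_Iic ⟨hu0, hu1⟩, hinter, Real.volume_Icc, sub_zero]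
  · have hpre : cdf ρ ⁻¹' Iic u = univ :=
      eq_univ_of_forall fun x => (cdf_le_one ρ x).trans hu1
    rw [hpre, inter_eq_right.2 (fun x hx => hx.2.trans hu1), measure_univ, Real.volume_Icc]
    simp

end ProbabilityTheory

namespace MeasureTheory.Measure

lemma ext_of_pi_Iic {ι : Type*} [Fintype ι] {μ ν : Measure (ι → ℝ)} [IsFiniteMeasure μ]
    (h : ∀ u, μ (Iic u) = ν (Iic u)) : μ = ν := by
  have hspan : IsCountablySpanning (range (Iic : ℝ → Set ℝ)) :=
    ⟨fun n : ℕ => Iic (n : ℝ), fun n => mem_range_self _,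
      iUnion_eq_univ_iff.2 fun x => (exists_nat_ge x).imp fun _ hn => hn⟩
  have hgen : (inferInstance : MeasurableSpace (ι → ℝ)) =
      MeasurableSpace.generateFrom (pi univ '' pi univ fun _ => range (Iic : ℝ → Set ℝ)) :=
    (generateFrom_eq_pi (fun _ => (borel_eq_generateFrom_Iic ℝ).symm.trans
      BorelSpace.measurable_eq.symm) fun _ => hspan).symm
  refine ext_of_generateFrom_of_iUnion _ (fun n : ℕ => univ.pi fun _ => Iic (n : ℝ)) hgen
    (IsPiSystem.pi fun _ => isPiSystem_Iic) ?_ (fun n => mem_image_of_mem _ fun _ _ =>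
      mem_range_self _) (fun _ => measure_ne_top _ _) ?_
  · exact iUnion_eq_univ_iff.2 fun x => (eventually_all.2 fun i =>
      tendsto_natCast_atTop_atTop.eventually_ge_atTop (x i)).exists.imp fun _ hn i _ => hn i
  · rintro _ ⟨s, hs, rfl⟩
    choose c hc using fun i => hs i (mem_univ i)
    obtain rfl : s = fun i => Iic (c i) := funext fun i => (hc i).symm
    rw [pi_univ_Iic]
    exact h c

end MeasureTheory.Measure

namespace IsCopulaMeasure

variable {d : ℕ} {ν ν' : Measure (Fin d → ℝ)}

lemma measure_coord_preimage (hν : IsCopulaMeasure ν) (i : Fin d) {s : Set ℝ}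
    (hs : MeasurableSet s) : ν {v | v i ∈ s} = volume (s ∩ Icc 0 1) := by
  rw [← Measure.restrict_apply hs, ← hν.2 i, Measure.map_apply (measurable_pi_apply i) hs]
  rfl

lemma measure_Iic_eq_zero (hν : IsCopulaMeasure ν) {u : Fin d → ℝ} {i : Fin d}
    (hi : u i ≤ 0) : ν (Iic u) = 0 := by
  have hsub : Iic u ⊆ {v | v i ∈ Iic 0} := fun v hv => (hv i).trans hi
  refine measure_mono_null hsub ?_
  rw [hν.measure_coord_preimage i measurableSet_Iic]
  exact measure_mono_null (fun x hx => le_antisymm hx.1 hx.2.1) Real.volume_singleton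

lemma ae_lt_one (hν : IsCopulaMeasure ν) : ∀ᵐ v ∂ν, ∀ i, v i < 1 := by
  refine ae_all_iff.2 fun i => ae_iff.2 ?_
  simp only [not_lt]
  rw [show {v : Fin d → ℝ | 1 ≤ v i} = {v | v i ∈ Ici 1} from rfl,
    hν.measure_coord_preimage i measurableSet_Ici]
  exact measure_mono_null (fun x hx => le_antisymm hx.2.2 hx.1) Real.volume_singleton

lemma measure_Iic_eq_iSup (hν : IsCopulaMeasure ν) {u : Fin d → ℝ} :
    ν (Iic u) = ⨆ n : ℕ, ν (Iic fun i => min (u i) (1 - ((n : ℝ) + 2)⁻¹)) := by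
  have hmono : Monotone fun n : ℕ => Iic fun i => min (u i) (1 - ((n : ℝ) + 2)⁻¹) := by
    intro m n hmn v hv i
    refine (hv i).trans (min_le_min_left _ (sub_le_sub_left ?_ _))
    gcongr
  rw [← hmono.directed_le.measure_iUnion]
  refine le_antisymm (measure_mono_ae ?_) (measure_mono (iUnion_subset fun n v hv i =>
    (hv i).trans (min_le_left _ _)))
  filter_upwards [hν.ae_lt_one] with v hv hvu
  have hlim : Tendsto (fun n : ℕ => 1 - ((n : ℝ) + 2)⁻¹) atTop (𝓝 1) := by
    have h2 : Tendsto (fun n : ℕ => ((n : ℝ) + 2)⁻¹) atTop (𝓝 0) :=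
      tendsto_inv_atTop_zero.comp
        (tendsto_atTop_add_const_right _ 2 tendsto_natCast_atTop_atTop)
    simpa using (tendsto_const_nhds (x := (1 : ℝ))).sub h2
  obtain ⟨n, hn⟩ :=
    (eventually_all.2 fun i => hlim.eventually (eventually_gt_nhds (hv i))).exists
  exact mem_iUnion.2 ⟨n, fun i => le_min (hvu i) (hn i).le⟩

lemma ext (hν : IsCopulaMeasure ν) (hν' : IsCopulaMeasure ν')
    (h : ∀ u : Fin d → ℝ, (∀ i, u i ∈ Ioo 0 1) → ν (Iic u) = ν' (Iic u)) : ν = ν' := by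
  have := hν.1
  refine Measure.ext_of_pi_Iic fun u => ?_
  by_cases hu : ∀ i, 0 < u i
  · rw [hν.measure_Iic_eq_iSup, hν'.measure_Iic_eq_iSup]
    refine iSup_congr fun n => h _ fun i => ⟨lt_min (hu i) ?_, (min_le_right _ _).trans_lt ?_⟩
    · have : ((n : ℝ) + 2)⁻¹ < 1 :=
        inv_lt_one_of_one_lt₀ (by linarith [n.cast_nonneg (α := ℝ)])
      linarith
    · have : 0 < ((n : ℝ) + 2)⁻¹ := by positivity
      linarith
  · push Not at hu
    obtain ⟨i, hi⟩ := hu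
    rw [hν.measure_Iic_eq_zero hi, hν'.measure_Iic_eq_zero hi]

end IsCopulaMeasure

section Copula

variable {d : ℕ}

lemma copulaFn_eq_measureReal (ν : Measure (Fin d → ℝ)) (u : Fin d → ℝ) :
    copulaFn ν u = ν.real (Iic u) := rfl

lemma measurable_copulaFn (ν : Measure (Fin d → ℝ)) [SFinite ν] : Measurable (copulaFn ν) :=
  (measurable_measure_prodMk_left (measurableSet_le measurable_snd measurable_fst)).ennreal_toReal

lemma integrable_copulaFn (ν ρ : Measure (Fin d → ℝ)) [IsProbabilityMeasure ν]
    [IsFiniteMeasure ρ] : Integrable (copulaFn ν) ρ :=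
  .of_bound (measurable_copulaFn ν).aestronglyMeasurable 1 (ae_of_all _ fun u => by
    rw [copulaFn_eq_measureReal, Real.norm_of_nonneg measureReal_nonneg]
    exact measureReal_le_one)

open Finset in
lemma card_filter_sortVec_le (x : Fin d → ℝ) (t : ℝ) :
    #{i | sortVec x i ≤ t} = #{i | x i ≤ t} :=
  card_equiv (Tuple.sort x) fun _ => by simp only [mem_filter, Finset.mem_univ, true_and]; rfl

open Finset in
lemma sortVec_le_iff (x : Fin d → ℝ) (i : Fin d) (t : ℝ) :
    sortVec x i ≤ t ↔ i < #{j | x j ≤ t} := by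
  rw [← card_filter_sortVec_le]
  exact (Tuple.lt_card_le_iff_apply_le_of_monotone (Tuple.monotone_sort x)).symm

open Finset in
lemma measurable_sortVec : Measurable (sortVec (d := d)) := by
  refine measurable_pi_lambda _ fun i => measurable_of_Iic fun t => ?_
  have hcard : Measurable fun x : Fin d → ℝ => #{j | x j ≤ t} := by
    simp_rw [card_filter]
    exact Finset.measurable_sum _ fun j _ =>
      Measurable.ite (measurable_pi_apply j measurableSet_Iic) measurable_const measurable_const
  have hpre : (fun x => sortVec x i) ⁻¹' Iic t =
      (fun x : Fin d → ℝ => #{j | x j ≤ t}) ⁻¹' {n | i < n} :=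
    ext fun x => sortVec_le_iff x i t
  rw [hpre]
  exact hcard .of_discrete

lemma exists_perm_le_of_sortVec_le {x y : Fin d → ℝ} (h : sortVec x ≤ sortVec y) :
    ∃ π : Equiv.Perm (Fin d), x ≤ y ∘ π := by
  refine ⟨Tuple.sort y * (Tuple.sort x)⁻¹, fun i => ?_⟩
  simpa [sortVec] using h ((Tuple.sort x)⁻¹ i)

lemma measure_sortVec_preimage_Iic_le (μ : Measure (Fin d → ℝ)) (y : Fin d → ℝ) :
    μ (sortVec ⁻¹' Iic (sortVec y)) ≤ ∑ π : Equiv.Perm (Fin d), μ (Iic (y ∘ π)) :=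
  calc μ (sortVec ⁻¹' Iic (sortVec y)) ≤ μ (⋃ π : Equiv.Perm (Fin d), Iic (y ∘ π)) :=
        measure_mono fun _ hx => mem_iUnion.2 (exists_perm_le_of_sortVec_le hx)
    _ ≤ _ := measure_iUnion_fintype_le _ _

lemma nullSingletonClass_map_sortVec {μ : Measure (Fin d → ℝ)}
    (hμ : ∀ j, NullSingletonClass (μ.map fun x => x j)) (i : Fin d) :
    NullSingletonClass ((μ.map sortVec).map fun x => x i) := by
  refine ⟨fun t => ?_⟩
  rw [Measure.map_map (measurable_pi_apply i) measurable_sortVec,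
    Measure.map_apply ((measurable_pi_apply i).comp measurable_sortVec)
      (measurableSet_singleton t)]
  have hsub : (fun x => x i) ∘ sortVec ⁻¹' {t} ⊆ ⋃ j, (fun x : Fin d → ℝ => x j) ⁻¹' {t} :=
    fun x hx => mem_iUnion.2 ⟨Tuple.sort x i, hx⟩
  refine measure_mono_null hsub (measure_iUnion_null fun j => ?_)
  rw [← Measure.map_apply (measurable_pi_apply j) (measurableSet_singleton t)]
  exact (hμ j).measure_singleton t

lemma measurable_comp_perm (σ : Equiv.Perm (Fin d)) :
    Measurable fun x : Fin d → ℝ => x ∘ σ :=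
  measurable_pi_lambda _ fun i => measurable_pi_apply (σ i)

lemma integral_copulaFn_comp_perm {μ : Measure (Fin d → ℝ)} [SFinite μ]
    {σ : Equiv.Perm (Fin d)} (hσ : μ.map (fun x => x ∘ σ) = μ) :
    ∫ y, copulaFn μ (y ∘ σ) ∂μ = ∫ y, copulaFn μ y ∂μ := by
  have h := integral_map (measurable_comp_perm σ).aemeasurable
    (measurable_copulaFn μ).aestronglyMeasurable (μ := μ)
  rw [hσ] at h
  exact h.symm

lemma integral_copulaFn_map_sortVec_le (μ : Measure (Fin d → ℝ)) [IsProbabilityMeasure μ]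
    (hsymm : ∀ σ : Equiv.Perm (Fin d), μ.map (fun x => x ∘ σ) = μ) :
    ∫ x, copulaFn (μ.map sortVec) x ∂(μ.map sortVec) ≤ d.factorial * ∫ y, copulaFn μ y ∂μ := by
  have := Measure.isProbabilityMeasure_map (μ := μ) measurable_sortVec.aemeasurable
  have hpoint : ∀ y, copulaFn (μ.map sortVec) (sortVec y) ≤
      ∑ π : Equiv.Perm (Fin d), copulaFn μ (y ∘ π) := by
    intro y
    simp only [copulaFn_eq_measureReal, Measure.real]
    rw [Measure.map_apply measurable_sortVec measurableSet_Iic,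
      ← ENNReal.toReal_sum fun π _ => measure_ne_top μ _]
    exact ENNReal.toReal_mono (ENNReal.sum_ne_top.2 fun π _ => measure_ne_top μ _)
      (measure_sortVec_preimage_Iic_le μ y)
  have hperm : ∀ π : Equiv.Perm (Fin d), Integrable (fun y => copulaFn μ (y ∘ π)) μ :=
    fun π => (integrable_copulaFn μ _).comp_measurable (measurable_comp_perm π)
  calc ∫ x, copulaFn (μ.map sortVec) x ∂(μ.map sortVec)
      = ∫ y, copulaFn (μ.map sortVec) (sortVec y) ∂μ :=
        integral_map measurable_sortVec.aemeasurable (measurable_copulaFn _).aestronglyMeasurable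
    _ ≤ ∫ y, ∑ π : Equiv.Perm (Fin d), copulaFn μ (y ∘ π) ∂μ := by
        refine integral_mono ((integrable_copulaFn _ _).comp_measurable measurable_sortVec)
          (integrable_finsetSum _ fun π _ => hperm π) hpoint
    _ = ∑ π : Equiv.Perm (Fin d), ∫ y, copulaFn μ (y ∘ π) ∂μ :=
        integral_finsetSum _ fun π _ => hperm π
    _ = d.factorial * ∫ y, copulaFn μ y ∂μ := by
        simp only [integral_copulaFn_comp_perm (hsymm _), Finset.sum_const, Finset.card_univ,
          Fintype.card_perm, Fintype.card_fin, nsmul_eq_mul]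

noncomputable def margTransform (ρ : Measure (Fin d → ℝ)) (x : Fin d → ℝ) : Fin d → ℝ :=
  fun i => margCDF ρ i (x i)

section MargTransform

variable (H : Measure (Fin d → ℝ)) [IsProbabilityMeasure H]

lemma margCDF_eq_cdf (i : Fin d) : margCDF H i = cdf (H.map fun x => x i) := by
  have := Measure.isProbabilityMeasure_map (μ := H) (measurable_pi_apply i).aemeasurable
  funext t
  rw [cdf_eq_real]
  rfl

lemma measurable_margTransform : Measurable (margTransform H) :=
  measurable_pi_lambda _ fun i => by
    simp only [margTransform, margCDF_eq_cdf]
    exact (monotone_cdf _).measurable.comp (measurable_pi_apply i)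

variable {H}

lemma isCopulaMeasure_map_margTransform (hH : ∀ i, NullSingletonClass (H.map fun x => x i)) :
    IsCopulaMeasure (H.map (margTransform H)) := by
  refine ⟨Measure.isProbabilityMeasure_map (measurable_margTransform H).aemeasurable, fun i => ?_⟩
  have := Measure.isProbabilityMeasure_map (μ := H) (measurable_pi_apply i).aemeasurable
  have := hH i
  have hcomp : (fun x => x i) ∘ margTransform H =
      cdf (H.map fun x => x i) ∘ fun x => x i := by
    funext x
    simp only [Function.comp_apply, margTransform, margCDF_eq_cdf]
  rw [Measure.map_map (measurable_pi_apply i) (measurable_margTransform H), hcomp,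
    ← Measure.map_map (monotone_cdf _).measurable (measurable_pi_apply i),
    map_cdf_eq_uniform]

lemma exists_margTransform_eq_and_preimage_Iic (hH : ∀ i, NullSingletonClass (H.map fun x => x i))
    {u : Fin d → ℝ} (hu : ∀ i, u i ∈ Ioo 0 1) :
    ∃ t, margTransform H t = u ∧ margTransform H ⁻¹' Iic u = Iic t := by
  have := fun i => Measure.isProbabilityMeasure_map (μ := H) (measurable_pi_apply i).aemeasurable
  choose t ht using fun i => exists_cdf_eq_and_preimage_Iic (ρ := H.map fun x => x i) (hu i)
  refine ⟨t, funext fun i => by simp only [margTransform, margCDF_eq_cdf, (ht i).1], ?_⟩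
  ext x
  simp only [mem_preimage, mem_Iic, Pi.le_def, margTransform, margCDF_eq_cdf]
  exact forall_congr' fun i => Set.ext_iff.1 (ht i).2 (x i)

lemma IsCopulaMeasure.eq_map_margTransform (hH : ∀ i, NullSingletonClass (H.map fun x => x i))
    {ν : Measure (Fin d → ℝ)} (hν : IsCopulaMeasure ν)
    (hsklar : ∀ x, copulaFn H x = copulaFn ν (margTransform H x)) :
    ν = H.map (margTransform H) := by
  refine hν.ext (isCopulaMeasure_map_margTransform hH) fun u hu => ?_
  obtain ⟨t, rfl, hpre⟩ := exists_margTransform_eq_and_preimage_Iic hH hu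
  have := hν.1
  rw [Measure.map_apply (measurable_margTransform H) measurableSet_Iic, hpre]
  exact ((ENNReal.toReal_eq_toReal_iff' (measure_ne_top _ _) (measure_ne_top _ _)).1
    (hsklar t)).symm

end MargTransform

lemma IsOrderTransform.integral_copulaFn_eq {μ ν : Measure (Fin d → ℝ)}
    (hμ : IsCopulaMeasure μ) (hν : IsOrderTransform μ ν) :
    ∫ u, copulaFn ν u ∂ν = ∫ x, copulaFn (μ.map sortVec) x ∂(μ.map sortVec) := by
  have := hμ.1
  have := hν.1.1
  set H := μ.map sortVec
  have := Measure.isProbabilityMeasure_map (μ := μ) measurable_sortVec.aemeasurable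
  have hH : ∀ i, NullSingletonClass (H.map fun x => x i) :=
    nullSingletonClass_map_sortVec fun j => by rw [hμ.2 j]; infer_instance
  have hsklar : ∀ x, copulaFn H x = copulaFn ν (margTransform H x) := hν.2
  calc ∫ u, copulaFn ν u ∂ν = ∫ u, copulaFn ν u ∂(H.map (margTransform H)) :=
        congrArg (fun ρ => ∫ u, copulaFn ν u ∂ρ) (hν.1.eq_map_margTransform hH hsklar)
    _ = ∫ x, copulaFn ν (margTransform H x) ∂H :=
        integral_map (measurable_margTransform H).aemeasurable
          (measurable_copulaFn ν).aestronglyMeasurable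
    _ = ∫ x, copulaFn H x ∂H := by simp only [hsklar]

end Copula

theorem stmt15_general (d : ℕ) (μ ν : Measure (Fin d → ℝ))
    (hμ : IsCopulaMeasure μ) (hν : IsOrderTransform μ ν)
    (hsymm : ∀ σ : Equiv.Perm (Fin d), μ.map (fun x => x ∘ σ) = μ) :
    (∫ u, copulaFn ν u ∂ν ≤ (Nat.factorial d : ℝ) * ∫ u, copulaFn μ u ∂μ) ∧
      ((∫ u, copulaFn μ u ∂μ) = 0 → (∫ u, copulaFn ν u ∂ν) = 0) := by
  have := hμ.1
  have hle := (hν.integral_copulaFn_eq hμ).trans_le (integral_copulaFn_map_sortVec_le μ hsymm)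
  refine ⟨hle, fun h0 => le_antisymm ?_ (integral_nonneg fun u => measureReal_nonneg)⟩
  simpa [h0] using hle

theorem stmt15 (d : ℕ) (hd : 2 ≤ d) (μ ν : Measure (Fin d → ℝ))
    (hμ : IsCopulaMeasure μ) (hν : IsOrderTransform μ ν)
    (hsymm : ∀ σ : Equiv.Perm (Fin d), μ.map (fun x => x ∘ σ) = μ) :
    (∫ u, copulaFn ν u ∂ν ≤ (Nat.factorial d : ℝ) * ∫ u, copulaFn μ u ∂μ) ∧
      ((∫ u, copulaFn μ u ∂μ) = 0 → (∫ u, copulaFn ν u ∂ν) = 0) :=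
  stmt15_general d μ ν hμ hν hsymm
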